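/- arXiv:1403.0518 — 2 statements merged into one kernel-verified Lean document; each statement's English description precedes it below -/
import Mathlib

section
/- Let X, Y be Hilbert spaces, w ∈ X, R > 0, and F : B_R(w) → ℝ a C² functional whose second derivative is Lipschitz with constant M, i.e. ‖δ²F(x) − δ²F(y)‖ ≤ M‖x − y‖ for x, y ∈ B_R(w). Suppose there exist μ, r > 0 with ⟨δ²F(w)v, v⟩ ≥ μ‖v‖² for all v, ‖δF(w)‖ ≤ r, and 2Mr/μ² < 1 (and 2r/μ ≤ R). Then there exists w̄ ∈ B_R(w) with δF(w̄) = 0, ‖w − w̄‖ ≤ 2r/μ, and ⟨δ²F(w̄)v, v⟩ ≥ (1 − 2Mr/μ²)μ‖v‖² for all v ∈ X. -/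
/-!
By Lax–Milgram the coercive form `δ²F(w)` is invertible, so one looks for a fixed point of the
simplified Newton map `x ↦ x - δ²F(w)⁻¹ δF(x)` on a closed ball `B̄_ρ(w)`. The mean value
inequality with `‖δ²F(z) - δ²F(w)‖ ≤ Mρ` makes it a contraction with constant `Mρ/μ`, and the
second-order Taylor bound `‖δF(x) - δF(w) - δ²F(w)(x - w)‖ ≤ M‖x - w‖²/2` makes it map the ball
into itself as soon as `Mρ²/2 + r ≤ μρ`; since `2Mr/μ² < 1`, both hold for some radius
`ρ < 2r/μ`. Finally `‖δ²F(w̄) - δ²F(w)‖ ≤ M · 2r/μ` transfers the coercivity to `w̄`.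
-/

open Metric Set

section Coercive

variable {E : Type*} [NormedAddCommGroup E] [NormedSpace ℝ E]

theorem mul_norm_le_norm_apply_of_coercive (B : E →L[ℝ] E →L[ℝ] ℝ) {μ : ℝ}
    (hB : ∀ v, μ * ‖v‖ ^ 2 ≤ B v v) (v : E) : μ * ‖v‖ ≤ ‖B v‖ := by
  rcases eq_or_ne v 0 with rfl | hv
  · simp
  refine le_of_mul_le_mul_right ?_ (norm_pos_iff.mpr hv)
  calc μ * ‖v‖ * ‖v‖ = μ * ‖v‖ ^ 2 := by ring
    _ ≤ B v v := hB v
    _ ≤ ‖B v v‖ := Real.le_norm_self _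
    _ ≤ ‖B v‖ * ‖v‖ := (B v).le_opNorm v

theorem sub_norm_sub_mul_sq_le_apply_apply (B B' : E →L[ℝ] E →L[ℝ] ℝ) {μ : ℝ}
    (hB : ∀ v, μ * ‖v‖ ^ 2 ≤ B v v) (v : E) : (μ - ‖B - B'‖) * ‖v‖ ^ 2 ≤ B' v v := by
  have hdiff : (B - B') v v ≤ ‖B - B'‖ * ‖v‖ * ‖v‖ :=
    (Real.le_norm_self _).trans ((B - B').le_opNorm₂ v v)
  simp only [sub_apply] at hdiff
  linarith [hB v]

theorem exists_continuousLinearEquiv_eq_of_coercive {X : Type*} [NormedAddCommGroup X]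
    [InnerProductSpace ℝ X] [CompleteSpace X] (B : X →L[ℝ] X →L[ℝ] ℝ) {μ : ℝ} (hμ : 0 < μ)
    (hB : ∀ v, μ * ‖v‖ ^ 2 ≤ B v v) : ∃ A : X ≃L[ℝ] (X →L[ℝ] ℝ), ∀ v, A v = B v := by
  have hcoercive : IsCoercive B := ⟨μ, hμ, fun v => by rw [mul_assoc, ← sq]; exact hB v⟩
  refine ⟨hcoercive.continuousLinearEquivOfBilin.trans
    (InnerProductSpace.toDual ℝ X).toContinuousLinearEquiv, fun v => ?_⟩
  ext u
  simp

end Coercive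

section ZeroOfApproxLinear

variable {𝕜 E G : Type*} [NontriviallyNormedField 𝕜]
  [NormedAddCommGroup E] [NormedSpace 𝕜 E] [CompleteSpace E]
  [NormedAddCommGroup G] [NormedSpace 𝕜 G]

-- Banach's fixed point theorem for the simplified Newton map `x ↦ x - A⁻¹ (f x)`.
theorem exists_mem_closedBall_eq_zero_of_approxLinear (f : E → G) (A : E ≃L[𝕜] G)
    {w : E} {μ L ρ : ℝ} (hμ : 0 < μ) (hL : L < μ) (hρ : 0 ≤ ρ)
    (hA : ∀ z, μ * ‖z‖ ≤ ‖A z‖)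
    (hlin : ∀ x ∈ closedBall w ρ, ∀ y ∈ closedBall w ρ, ‖f x - f y - A (x - y)‖ ≤ L * ‖x - y‖)
    (hmaps : ∀ x ∈ closedBall w ρ, ‖f x - A (x - w)‖ ≤ μ * ρ) :
    ∃ x ∈ closedBall w ρ, f x = 0 := by
  set T : E → E := fun x => x - A.symm (f x)
  have hAT : ∀ x y, A (T x - y) = -(f x - A (x - y)) := fun x y => by
    simp only [T, map_sub, A.apply_symm_apply]; abel
  have hmapsTo : MapsTo T (closedBall w ρ) (closedBall w ρ) := fun x hx => by
    rw [mem_closedBall_iff_norm]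
    refine le_of_mul_le_mul_left ?_ hμ
    calc μ * ‖T x - w‖ ≤ ‖A (T x - w)‖ := hA _
      _ ≤ μ * ρ := by rw [hAT, norm_neg]; exact hmaps x hx
  have hlip : LipschitzOnWith (L / μ).toNNReal T (closedBall w ρ) := by
    refine LipschitzOnWith.of_dist_le_mul fun x hx y hy => ?_
    rw [dist_eq_norm, dist_eq_norm]
    refine le_of_mul_le_mul_left ?_ hμ
    calc μ * ‖T x - T y‖ ≤ ‖A (T x - T y)‖ := hA _
      _ = ‖f x - f y - A (x - y)‖ := by
        rw [← norm_neg]; congr 1; simp only [T, map_sub, A.apply_symm_apply]; abel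
      _ ≤ L * ‖x - y‖ := hlin x hx y hy
      _ ≤ μ * ((L / μ).toNNReal * ‖x - y‖) := by
        rw [← mul_assoc]
        gcongr
        rw [← div_le_iff₀' hμ]
        exact Real.le_coe_toNNReal _
  have hcontr : ContractingWith (L / μ).toNNReal (hmapsTo.restrict T _ _) :=
    ⟨by exact_mod_cast Real.toNNReal_lt_one.mpr ((div_lt_one hμ).mpr hL),
      hlip.mapsToRestrict hmapsTo⟩
  obtain ⟨x, hx, hTx, -⟩ := hcontr.exists_fixedPoint' isClosed_closedBall.isComplete hmapsTo
    (mem_closedBall_self hρ) (edist_ne_top _ _)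
  refine ⟨x, hx, ?_⟩
  simpa [T] using congrArg A (sub_eq_self.mp hTx)

end ZeroOfApproxLinear

theorem norm_sub_sub_fderiv_le_of_norm_fderiv_sub_le {E G : Type*}
    [NormedAddCommGroup E] [NormedSpace ℝ E] [NormedAddCommGroup G] [NormedSpace ℝ G]
    {f : E → G} {f' : E → E →L[ℝ] G} {s : Set E} {w x : E} {M : ℝ}
    (hs : Convex ℝ s) (hw : w ∈ s) (hx : x ∈ s) (hf : ∀ z ∈ s, HasFDerivAt f (f' z) z)
    (hlip : ∀ z ∈ s, ‖f' z - f' w‖ ≤ M * ‖z - w‖) :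
    ‖f x - f w - f' w (x - w)‖ ≤ M / 2 * ‖x - w‖ ^ 2 := by
  set u := x - w
  have hseg : ∀ t ∈ Icc (0 : ℝ) 1, w + t • u ∈ s := fun t ht => hs.add_smul_sub_mem hw hx ht
  set g : ℝ → G := fun t => f (w + t • u) - f w - t • f' w u
  have hg : ∀ t ∈ Icc (0 : ℝ) 1, HasDerivAt g (f' (w + t • u) u - f' w u) t := fun t ht => by
    have hpath : HasDerivAt (fun t : ℝ => w + t • u) u t := by
      simpa using ((hasDerivAt_id t).smul_const u).const_add w
    have hlin : HasDerivAt (fun t : ℝ => t • f' w u) (f' w u) t := by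
      simpa using (hasDerivAt_id' t).smul_const (f' w u)
    exact (((hf _ (hseg t ht)).comp_hasDerivAt t hpath).sub_const (f w)).sub hlin
  have hbound : ∀ t ∈ Ico (0 : ℝ) 1, ‖f' (w + t • u) u - f' w u‖ ≤ M * ‖u‖ ^ 2 * t :=
    fun t ht => calc
      ‖f' (w + t • u) u - f' w u‖ ≤ ‖f' (w + t • u) - f' w‖ * ‖u‖ := by
        rw [← sub_apply]; exact ContinuousLinearMap.le_opNorm _ _
      _ ≤ M * ‖(w + t • u) - w‖ * ‖u‖ := by
        gcongr; exact hlip _ (hseg t (Ico_subset_Icc_self ht))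
      _ = M * ‖u‖ ^ 2 * t := by
        rw [add_sub_cancel_left, norm_smul, Real.norm_of_nonneg ht.1]; ring
  have hB : ∀ t : ℝ, HasDerivAt (fun t => M / 2 * ‖u‖ ^ 2 * t ^ 2) (M * ‖u‖ ^ 2 * t) t :=
    fun t => by
      refine ((hasDerivAt_pow 2 t).const_mul (M / 2 * ‖u‖ ^ 2)).congr_deriv ?_
      push_cast; ring
  have := image_norm_le_of_norm_deriv_right_le_deriv_boundary
    (fun t ht => (hg t ht).continuousAt.continuousWithinAt)
    (fun t ht => (hg t (Ico_subset_Icc_self ht)).hasDerivWithinAt) (by simp [g]) hB hbound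
    (right_mem_Icc.mpr zero_le_one)
  simpa [g, u] using this

theorem norm_sub_sub_fderiv_sub_le_on_closedBall {E G : Type*}
    [NormedAddCommGroup E] [NormedSpace ℝ E] [NormedAddCommGroup G] [NormedSpace ℝ G]
    {f : E → G} {f' : E → E →L[ℝ] G} {w : E} {M ρ R : ℝ} (hM : 0 ≤ M) (hρR : ρ < R)
    (hf : ∀ z ∈ ball w R, HasFDerivAt f (f' z) z)
    (hlip : ∀ z ∈ ball w R, ‖f' z - f' w‖ ≤ M * ‖z - w‖) {x y : E} (hx : x ∈ closedBall w ρ)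
    (hy : y ∈ closedBall w ρ) : ‖f x - f y - f' w (x - y)‖ ≤ M * ρ * ‖x - y‖ :=
  (convex_closedBall w ρ).norm_image_sub_le_of_norm_hasFDerivWithin_le'
    (fun z hz => (hf z (closedBall_subset_ball hρR hz)).hasFDerivWithinAt)
    (fun z hz => (hlip z (closedBall_subset_ball hρR hz)).trans
      (mul_le_mul_of_nonneg_left (mem_closedBall_iff_norm.mp hz) hM)) hy hx

-- `ρ := (1 + κ) r / μ` with `κ := 2Mr/μ²`: then `Mρ = κ(1 + κ)μ/2` and `μρ = (1 + κ) r`, and the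
-- Taylor condition reduces to `(1 + κ)² ≤ 4`.
theorem exists_radius_of_two_mul_mul_div_sq_lt_one {M μ r : ℝ} (hM : 0 ≤ M) (hμ : 0 < μ)
    (hr : 0 < r) (hsmall : 2 * M * r / μ ^ 2 < 1) :
    ∃ ρ, 0 < ρ ∧ ρ < 2 * r / μ ∧ M * ρ < μ ∧ M / 2 * ρ ^ 2 + r ≤ μ * ρ := by
  set κ := 2 * M * r / μ ^ 2 with hκ
  have hκ0 : 0 ≤ κ := by positivity
  have hμρ : μ * ((1 + κ) * r / μ) = (1 + κ) * r := by field_simp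
  have hMρ : M * ((1 + κ) * r / μ) = κ * (1 + κ) / 2 * μ := by rw [hκ]; field_simp
  refine ⟨(1 + κ) * r / μ, by positivity, by gcongr; linarith, ?_, ?_⟩
  · have : κ * (1 + κ) / 2 < 1 := by nlinarith
    rw [hMρ]; nlinarith
  · have hquad : M / 2 * ((1 + κ) * r / μ) ^ 2 = κ * (1 + κ) ^ 2 / 4 * r := by
      linear_combination (1 + κ) * r / μ / 2 * hMρ + κ * (1 + κ) / 4 * hμρ
    have : κ * ((1 + κ) ^ 2 / 4 - 1) * r ≤ 0 :=
      mul_nonpos_of_nonpos_of_nonneg (mul_nonpos_of_nonneg_of_nonpos hκ0 (by nlinarith)) hr.le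
    rw [hquad, hμρ]; linarith

theorem stmt0_general {X : Type*} [NormedAddCommGroup X] [InnerProductSpace ℝ X] [CompleteSpace X]
    (F' : X → X →L[ℝ] ℝ) (F'' : X → X →L[ℝ] X →L[ℝ] ℝ)
    (w : X) (R M μ r : ℝ) (hR : 0 < R) (hM : 0 ≤ M) (hμ : 0 < μ) (hr : 0 < r)
    (hd2 : ∀ x ∈ ball w R, HasFDerivAt F' (F'' x) x)
    (hLip : ∀ x ∈ ball w R, ∀ y ∈ ball w R, ‖F'' x - F'' y‖ ≤ M * ‖x - y‖)
    (hcoerc : ∀ v : X, μ * ‖v‖ ^ 2 ≤ F'' w v v)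
    (hres : ‖F' w‖ ≤ r)
    (hsmall : 2 * M * r / μ ^ 2 < 1) (hRr : 2 * r / μ ≤ R) :
    ∃ wb : X, wb ∈ closedBall w R ∧ F' wb = 0 ∧ ‖w - wb‖ ≤ 2 * r / μ ∧
      ∀ v : X, (1 - 2 * M * r / μ ^ 2) * μ * ‖v‖ ^ 2 ≤ F'' wb v v := by
  obtain ⟨ρ, hρ0, hρlt, hcontraction, hinvariance⟩ :=
    exists_radius_of_two_mul_mul_div_sq_lt_one hM hμ hr hsmall
  have hρR : ρ < R := hρlt.trans_le hRr
  have hwB : w ∈ ball w R := mem_ball_self hR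
  have hLipw : ∀ z ∈ ball w R, ‖F'' z - F'' w‖ ≤ M * ‖z - w‖ := fun z hz => hLip z hz w hwB
  obtain ⟨A, hA⟩ := exists_continuousLinearEquiv_eq_of_coercive (F'' w) hμ hcoerc
  obtain ⟨wb, hwb, hzero⟩ := exists_mem_closedBall_eq_zero_of_approxLinear F' A hμ hcontraction
    hρ0.le (fun z => hA z ▸ mul_norm_le_norm_apply_of_coercive (F'' w) hcoerc z)
    (fun x hx y hy => hA (x - y) ▸ norm_sub_sub_fderiv_sub_le_on_closedBall hM hρR hd2 hLipw hx hy)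
    (fun x hx => calc
      ‖F' x - A (x - w)‖ = ‖(F' x - F' w - F'' w (x - w)) + F' w‖ := by rw [hA]; congr 1; abel
      _ ≤ M / 2 * ‖x - w‖ ^ 2 + r := (norm_add_le _ _).trans (add_le_add
          (norm_sub_sub_fderiv_le_of_norm_fderiv_sub_le (convex_ball w R) hwB
            (closedBall_subset_ball hρR hx) hd2 hLipw) hres)
      _ ≤ M / 2 * ρ ^ 2 + r := by gcongr; exact mem_closedBall_iff_norm.mp hx
      _ ≤ μ * ρ := hinvariance)
  have hdist : ‖w - wb‖ ≤ 2 * r / μ := by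
    rw [norm_sub_rev]; exact (mem_closedBall_iff_norm.mp hwb).trans hρlt.le
  refine ⟨wb, closedBall_subset_closedBall hρR.le hwb, hzero, hdist, fun v => ?_⟩
  calc (1 - 2 * M * r / μ ^ 2) * μ * ‖v‖ ^ 2 = (μ - M * (2 * r / μ)) * ‖v‖ ^ 2 := by
        field_simp
    _ ≤ (μ - ‖F'' w - F'' wb‖) * ‖v‖ ^ 2 := by
        gcongr
        exact (hLip w hwB wb (closedBall_subset_ball hρR hwb)).trans (by gcongr)
    _ ≤ F'' wb v v := sub_norm_sub_mul_sq_le_apply_apply _ _ hcoerc v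

/-- Quantitative inverse function theorem (Lemma B.1 variant):
existence of a locally unique critical point near an approximate critical point. -/
theorem stmt0 {X : Type*} [NormedAddCommGroup X] [InnerProductSpace ℝ X] [CompleteSpace X]
    (F : X → ℝ) (F' : X → X →L[ℝ] ℝ) (F'' : X → X →L[ℝ] X →L[ℝ] ℝ)
    (w : X) (R M μ r : ℝ) (hR : 0 < R) (hM : 0 ≤ M) (hμ : 0 < μ) (hr : 0 < r)
    (hd1 : ∀ x ∈ ball w R, HasFDerivAt F (F' x) x)
    (hd2 : ∀ x ∈ ball w R, HasFDerivAt F' (F'' x) x)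
    (hLip : ∀ x ∈ ball w R, ∀ y ∈ ball w R, ‖F'' x - F'' y‖ ≤ M * ‖x - y‖)
    (hcoerc : ∀ v : X, μ * ‖v‖ ^ 2 ≤ F'' w v v)
    (hres : ‖F' w‖ ≤ r)
    (hsmall : 2 * M * r / μ ^ 2 < 1) (hRr : 2 * r / μ ≤ R) :
    ∃ wb : X, wb ∈ closedBall w R ∧ F' wb = 0 ∧ ‖w - wb‖ ≤ 2 * r / μ ∧
      ∀ v : X, (1 - 2 * M * r / μ ^ 2) * μ * ‖v‖ ^ 2 ≤ F'' wb v v :=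
  stmt0_general F' F'' w R M μ r hR hM hμ hr hd2 hLip hcoerc hres hsmall hRr
end

section
/- Let U ⊂ ℝ² be a bounded convex polygon, x' ∈ int(U), and let Ψ ∈ H²(U) be the harmonic function solving ΔΨ = 0 in U with Dirichlet data Ψ(s) = −(1/2π) log|s − x'| on ∂U. If Ψ* is a harmonic conjugate of Ψ on U (so ∇Ψ* = R∇Ψ where R is rotation by π/2), then Ψ* satisfies the Neumann condition ∂Ψ*/∂ν = −∇ŷ(· − x')·ν on ∂U, where ŷ(x) = (1/2π) arg(x) and ν is the outward unit normal. -/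
/-!
On a flat piece of `∂U` the boundary contains the segment `t ↦ s + t • R ν`, along which `Ψ`
coincides with its Dirichlet data; hence the tangential derivative `⟪∇Ψ(s), R ν⟫` equals that of
`-(1/2π) log ‖· - x'‖`, namely `-(1/2π) ⟪s - x', R ν⟫ / ‖s - x'‖²`. The Cauchy–Riemann relation
`∇Ψ* = R ∇Ψ` extends to `s` by continuity, and `R` is skew, so `⟪∇Ψ*(s), ν⟫ = -⟪∇Ψ(s), R ν⟫`;
this is the Neumann value because `∇ŷ(x) = R x / (2π ‖x‖²)`.
-/

noncomputable section
open Real Metric RealInnerProductSpace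

abbrev E2 := EuclideanSpace ℝ (Fin 2)

/-- Rotation by π/2 (the matrix R₄). -/
def rotQ (w : E2) : E2 := WithLp.toLp 2 ![-(w 1), w 0]

/-- The smooth extension of ∇ŷ, ŷ(x) = (1/2π) arg(x). -/
def gyhat (x : E2) : E2 := (2 * π * ‖x‖ ^ 2)⁻¹ • (WithLp.toLp 2 ![-(x 1), x 0] : E2)

open Topology

section LineDerivative

variable {E F : Type*} [NormedAddCommGroup E] [NormedSpace ℝ E]
  [NormedAddCommGroup F] [NormedSpace ℝ F]

theorem HasFDerivAt.apply_eq_of_eventuallyEq_line {f g : E → F} {f' g' : E →L[ℝ] F}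
    {x v : E} (hf : HasFDerivAt f f' x) (hg : HasFDerivAt g g' x)
    (h : ∀ᶠ t : ℝ in 𝓝 0, f (x + t • v) = g (x + t • v)) : f' v = g' v := by
  have hline : HasDerivAt (fun t : ℝ => x + t • v) v 0 := by
    simpa using ((hasDerivAt_id (0 : ℝ)).smul_const v).const_add x
  have hx : x = x + (0 : ℝ) • v := by simp
  exact (hf.comp_hasDerivAt_of_eq 0 hline hx).unique
    ((hg.comp_hasDerivAt_of_eq 0 hline hx).congr_of_eventuallyEq h)

theorem eventually_add_smul_mem_ball (x v : E) {δ : ℝ} (hδ : 0 < δ) :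
    ∀ᶠ t : ℝ in 𝓝 0, x + t • v ∈ ball x δ := by
  have hcont : Continuous fun t : ℝ => x + t • v := by fun_prop
  exact (hcont.tendsto' 0 x (by simp)).eventually_mem (ball_mem_nhds x hδ)

end LineDerivative

section InnerProduct

variable {F : Type*} [NormedAddCommGroup F] [InnerProductSpace ℝ F]

theorem hasFDerivAt_log_norm_sub {x a : F} (hxa : x ≠ a) :
    HasFDerivAt (fun y => Real.log ‖y - a‖) ((‖x - a‖ ^ 2)⁻¹ • innerSL ℝ (x - a)) x := by
  have hsq : HasFDerivAt (fun y => ‖y - a‖ ^ 2) (2 • innerSL ℝ (x - a)) x := by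
    simpa using ((hasFDerivAt_id x).sub_const a).norm_sq
  have hne : ‖x - a‖ ^ 2 ≠ 0 := by simpa [sub_eq_zero] using hxa
  have hhalf : (fun y => Real.log ‖y - a‖) = fun y => 1 / 2 * Real.log (‖y - a‖ ^ 2) := by
    funext y
    rw [Real.log_pow]
    push_cast
    ring
  rw [hhalf]
  refine ((hsq.log hne).const_mul (1 / 2 : ℝ)).congr_fderiv ?_
  ext v
  simp only [smul_apply, coe_innerSL_apply, nsmul_eq_mul, smul_eq_mul]
  ring

theorem ContDiffOn.continuousOn_gradient {f : F → ℝ} {V : Set F} [CompleteSpace F]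
    (hf : ContDiffOn ℝ 1 f V) (hV : IsOpen V) : ContinuousOn (gradient f) V :=
  (InnerProductSpace.toDual ℝ F).symm.continuous.comp_continuousOn
    (hf.continuousOn_fderiv_of_isOpen hV le_rfl)

end InnerProduct

section Rotation

theorem inner_rotQ_left (a b : E2) : ⟪rotQ a, b⟫ = -⟪a, rotQ b⟫ := by
  simp [rotQ, PiLp.inner_apply, Fin.sum_univ_two]

theorem inner_rotQ_self_left (a : E2) : ⟪rotQ a, a⟫ = 0 := by
  linarith [inner_rotQ_left a a, real_inner_comm a (rotQ a)]

theorem continuous_rotQ : Continuous rotQ := by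
  unfold rotQ
  fun_prop

theorem gyhat_eq_smul_rotQ (x : E2) : gyhat x = (2 * π * ‖x‖ ^ 2)⁻¹ • rotQ x := rfl

end Rotation

theorem stmt4_general
    (U : Set E2) (hUo : IsOpen U)
    (x' : E2) (hx' : x' ∈ U)
    (V : Set E2) (hVo : IsOpen V) (hUV : closure U ⊆ V)
    (Ψ Ψs : E2 → ℝ)
    (hΨ : ContDiffOn ℝ 1 Ψ V) (hΨs : ContDiffOn ℝ 1 Ψs V)
    -- Dirichlet boundary data of Ψ
    (hdir : ∀ s ∈ frontier U, Ψ s = -(1 / (2 * π)) * Real.log ‖s - x'‖)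
    -- Cauchy–Riemann: ∇Ψ* = R₄ ∇Ψ in U (Ψ* a harmonic conjugate of Ψ)
    (hCR : ∀ x ∈ U, gradient Ψs x = rotQ (gradient Ψ x))
    -- s is a boundary point on a flat edge with outward unit normal ν
    (s : E2) (hs : s ∈ frontier U) (ν : E2)
    (δ : ℝ) (hδ : 0 < δ)
    (hflat : ∀ x ∈ ball s δ, ⟪x - s, ν⟫ = 0 → x ∈ frontier U) :
    ⟪gradient Ψs s, ν⟫ = -⟪gyhat (s - x'), ν⟫ := by
  have hsx : s ≠ x' := fun h => (hUo.frontier_eq ▸ hs).2 (h ▸ hx')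
  have hsV : s ∈ V := hUV (frontier_subset_closure hs)
  have hCRs : gradient Ψs s = rotQ (gradient Ψ s) :=
    Set.EqOn.of_subset_closure hCR ((hΨs.continuousOn_gradient hVo).mono hUV)
      (continuous_rotQ.comp_continuousOn ((hΨ.continuousOn_gradient hVo).mono hUV))
      subset_closure subset_rfl (frontier_subset_closure hs)
  have hΨ_line : ∀ᶠ t : ℝ in 𝓝 0,
      Ψ (s + t • rotQ ν) = -(1 / (2 * π)) * Real.log ‖s + t • rotQ ν - x'‖ := by
    filter_upwards [eventually_add_smul_mem_ball s (rotQ ν) hδ] with t ht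
    refine hdir _ (hflat _ ht ?_)
    rw [add_sub_cancel_left, real_inner_smul_left, inner_rotQ_self_left, mul_zero]
  have hΨ_diff : DifferentiableAt ℝ Ψ s :=
    (hΨ.differentiableOn one_ne_zero).differentiableAt (hVo.mem_nhds hsV)
  have htan := hΨ_diff.hasGradientAt.hasFDerivAt.apply_eq_of_eventuallyEq_line
    ((hasFDerivAt_log_norm_sub hsx).const_mul _) hΨ_line
  simp only [InnerProductSpace.toDual_apply_apply] at htan
  rw [hCRs, inner_rotQ_left, htan, gyhat_eq_smul_rotQ, real_inner_smul_left, inner_rotQ_left]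
  simp only [smul_apply, innerSL_apply_apply, smul_eq_mul]
  ring

/-- The harmonic conjugate Ψ* of the regularised Green's function Ψ (harmonic in U with
Dirichlet data −(1/2π) log|s−x'|) satisfies the dislocation Neumann condition
∂Ψ*/∂ν = −∇ŷ(·−x')·ν at any boundary point of a flat edge of the convex domain U. -/
theorem stmt4
    (U : Set E2) (hUo : IsOpen U) (hUc : Convex ℝ U) (hUb : Bornology.IsBounded U)
    (x' : E2) (hx' : x' ∈ U)
    (V : Set E2) (hVo : IsOpen V) (hUV : closure U ⊆ V)
    (Ψ Ψs : E2 → ℝ)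
    (hΨ : ContDiffOn ℝ 1 Ψ V) (hΨs : ContDiffOn ℝ 1 Ψs V)
    -- Ψ is harmonic in U
    (hharm : ∀ x ∈ U,
      (fderivWithin ℝ (fun y => fderivWithin ℝ Ψ U y (EuclideanSpace.single 0 1)) U x)
        (EuclideanSpace.single 0 1) +
      (fderivWithin ℝ (fun y => fderivWithin ℝ Ψ U y (EuclideanSpace.single 1 1)) U x)
        (EuclideanSpace.single 1 1) = 0)
    -- Dirichlet boundary data of Ψ
    (hdir : ∀ s ∈ frontier U, Ψ s = -(1 / (2 * π)) * Real.log ‖s - x'‖)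
    -- Cauchy–Riemann: ∇Ψ* = R₄ ∇Ψ in U (Ψ* a harmonic conjugate of Ψ)
    (hCR : ∀ x ∈ U, gradient Ψs x = rotQ (gradient Ψ x))
    -- s is a boundary point on a flat edge with outward unit normal ν
    (s : E2) (hs : s ∈ frontier U) (ν : E2) (hν : ‖ν‖ = 1)
    (hout : ∀ y ∈ U, ⟪y - s, ν⟫ ≤ 0)
    (δ : ℝ) (hδ : 0 < δ)
    (hflat : ∀ x ∈ ball s δ, ⟪x - s, ν⟫ = 0 → x ∈ frontier U) :
    ⟪gradient Ψs s, ν⟫ = -⟪gyhat (s - x'), ν⟫ :=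
  stmt4_general U hUo x' hx' V hVo hUV Ψ Ψs hΨ hΨs hdir hCR s hs ν δ hδ hflat
end
end
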